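/- arXiv:2412.04825 — 4 statements merged into one kernel-verified Lean document; each statement's English description precedes it below -/
import Mathlib

section
/- Let n ≥ 2, 1 ≤ k ≤ n−1, and let p, q be distinct qubit indices. Let R̃_{pq} be the restriction to the Hamming-weight-k subspace H_{n,k} of the operator R_{pq}. Then Tr(R̃_{pq}) = 0 and Tr(R̃_{pq}²) = 2·C(n−2, k−1) = (2k(n−k)/(n(n−1))) · C(n, k). -/
open Matrix Complex

noncomputable section

/-- Computational basis labels for `n` qubits: bit strings of length `n`. -/
abbrev QState (n : ℕ) := Fin n → Fin 2

/-- Operators on the `n`-qubit Hilbert space `(ℂ²)^⊗n`, as matrices in the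
computational basis. -/
abbrev QOp (n : ℕ) := Matrix (QState n) (QState n) ℂ

/-- Flip the bit at position `m` of a basis label. -/
def flipBit {n : ℕ} (m : Fin n) (b : QState n) : QState n :=
  Function.update b m (1 - b m)

/-- The Pauli `X` operator acting on qubit `m` (identity elsewhere). -/
def pauliX {n : ℕ} (m : Fin n) : QOp n :=
  Matrix.of fun b b' => if b = flipBit m b' then 1 else 0

/-- The Pauli `Y` operator acting on qubit `m` (identity elsewhere):
`Y|0⟩ = i|1⟩`, `Y|1⟩ = -i|0⟩`. -/
def pauliY {n : ℕ} (m : Fin n) : QOp n :=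
  Matrix.of fun b b' =>
    if b = flipBit m b' then (if b' m = 0 then Complex.I else -Complex.I) else 0

/-- The Pauli `Z` operator acting on qubit `m` (identity elsewhere). -/
def pauliZ {n : ℕ} (m : Fin n) : QOp n :=
  Matrix.of fun b b' => if b = b' then (if b m = 0 then 1 else -1) else 0

/-- `R_{pq} = (X_p X_q + Y_p Y_q)/2`. -/
def opR {n : ℕ} (p q : Fin n) : QOp n :=
  (1/2 : ℂ) • (pauliX p * pauliX q + pauliY p * pauliY q)

/-- `J_{pq} = (X_p Y_q − Y_p X_q)/2`. -/
def opJ {n : ℕ} (p q : Fin n) : QOp n :=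
  (1/2 : ℂ) • (pauliX p * pauliY q - pauliY p * pauliX q)

/-- `E_{pq} = (I − Z_p Z_q)/2`. -/
def opE {n : ℕ} (p q : Fin n) : QOp n :=
  (1/2 : ℂ) • ((1 : QOp n) - pauliZ p * pauliZ q)

/-- `S_{pq} = (Z_p − Z_q)/2`. -/
def opS {n : ℕ} (p q : Fin n) : QOp n :=
  (1/2 : ℂ) • (pauliZ p - pauliZ q)

/-- Hamming weight of a basis label. -/
def wt {n : ℕ} (b : QState n) : ℕ := ∑ i, (b i : ℕ)

/-- Basis labels of the Hamming-weight-`k` subspace `H_{n,k}`. -/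
abbrev HWBasis (n k : ℕ) := {b : QState n // wt b = k}

/-- Restriction (compression) of an `n`-qubit operator to the Hamming-weight-`k`
subspace; for Hamming-weight-preserving operators this is the restriction. -/
def restrict {n : ℕ} (k : ℕ) (M : QOp n) : Matrix (HWBasis n k) (HWBasis n k) ℂ :=
  Matrix.of fun x y => M x.1 y.1

attribute [local instance 100] LieRing.ofAssociativeRing

/-- The dynamical Lie algebra generated by a set `G` of (Hermitian) operators:
the real Lie algebra generated by `{i·H : H ∈ G}` under commutators and real
linear combinations. -/
def DLA {ι : Type*} [Fintype ι] [DecidableEq ι] (G : Set (Matrix ι ι ℂ)) :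
    LieSubalgebra ℝ (Matrix ι ι ℂ) :=
  LieSubalgebra.lieSpan ℝ _ ((fun H => Complex.I • H) '' G)

/-- The real dimension of the dynamical Lie algebra generated by `G`. -/
def dlaDim {ι : Type*} [Fintype ι] [DecidableEq ι] (G : Set (Matrix ι ι ℂ)) : ℕ :=
  Module.finrank ℝ ↥(DLA G)

/-- The cyclic successor `p + 1 (mod n)` of a qubit index. -/
def cyc {n : ℕ} (p : Fin n) : Fin n :=
  ⟨(p.1 + 1) % n, Nat.mod_lt _ (Nat.lt_of_le_of_lt (Nat.zero_le _) p.2)⟩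

/-!
On a basis state `|b⟩`, `R_{pq}` exchanges the bits `b p` and `b q` when they differ and
annihilates `|b⟩` when they agree. So the matrix of `R_{pq}` is a symmetric `0/1` matrix with
zero diagonal and at most one `1` per row, and `Tr(R̃_{pq}²)` counts the weight-`k` strings with
`b p ≠ b q`: choose which of `p`, `q` carries a `1`, then place the other `k - 1` ones among the
remaining `n - 2` positions.
-/

lemma fin_two_one_sub_ne_self (x : Fin 2) : 1 - x ≠ x := by
  revert x; decide

lemma fin_two_eq_one_sub_of_ne {a c : Fin 2} (h : a ≠ c) : c = 1 - a := by
  revert a c; decide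

lemma fin_two_val_add_val_of_ne {a c : Fin 2} (h : a ≠ c) : (a : ℕ) + c = 1 := by
  revert a c; decide

section Counting

variable {α : Type*} [Fintype α]

lemma card_filter_eq_one (f : α → Fin 2) :
    (Finset.univ.filter (f · = 1)).card = ∑ i, (f i : ℕ) := by
  rw [Finset.card_filter]
  refine Finset.sum_congr rfl fun i _ => ?_
  rcases Fin.exists_fin_two.mp ⟨f i, rfl⟩ with h | h <;> simp [h]

variable [DecidableEq α]

lemma card_fin_two_fun_sum_eq (k : ℕ) :
    Fintype.card {f : α → Fin 2 // ∑ i, (f i : ℕ) = k} = (Fintype.card α).choose k := by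
  rw [← Fintype.card_finset_len]
  refine Fintype.card_congr
    { toFun := fun f => ⟨Finset.univ.filter (f.1 · = 1), (card_filter_eq_one f.1).trans f.2⟩
      invFun := fun s => ⟨fun i => if i ∈ s.1 then 1 else 0, ?_⟩
      left_inv := fun f => ?_
      right_inv := fun s => ?_ }
  · simp [apply_ite Fin.val, s.2]
  · ext i
    rcases Fin.exists_fin_two.mp ⟨f.1 i, rfl⟩ with h | h <;> simp [h]
  · ext i
    simp

variable {a b : α}

lemma sum_eq_add_add_sum_ne {M : Type*} [AddCommMonoid M] (hab : a ≠ b) (g : α → M) :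
    ∑ i, g i = g a + g b + ∑ i : {i // i ≠ a ∧ i ≠ b}, g i := by
  have hrest : ∑ i : {i // i ≠ a ∧ i ≠ b}, g i = ∑ i ∈ (Finset.univ.erase a).erase b, g i :=
    (Finset.sum_subtype _ (fun i => by simp [and_comm]) g).symm
  rw [hrest, ← Finset.add_sum_erase _ _ (Finset.mem_univ a),
    ← Finset.add_sum_erase _ _ (Finset.mem_erase.mpr ⟨hab.symm, Finset.mem_univ b⟩), add_assoc]

lemma card_ne_and_ne (hab : a ≠ b) :
    Fintype.card {i // i ≠ a ∧ i ≠ b} = Fintype.card α - 2 := by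
  rw [Fintype.card_subtype, ← Finset.card_pair hab, ← Finset.card_compl]
  congr 1
  ext i
  simp

/-- Since `f b = 1 - f a`, such an `f` is determined by `f a` and its values off `{a, b}`. -/
def funNeEquiv (hab : a ≠ b) :
    {f : α → Fin 2 // f a ≠ f b} ≃ ({i // i ≠ a ∧ i ≠ b} → Fin 2) × Fin 2 where
  toFun f := (fun i => f.1 i, f.1 a)
  invFun x := ⟨fun i => if h : i = a then x.2 else if h' : i = b then 1 - x.2 else x.1 ⟨i, h, h'⟩,
    by simpa [hab.symm] using (fin_two_one_sub_ne_self x.2).symm⟩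
  left_inv f := by
    ext i
    by_cases ha : i = a
    · simp [ha]
    · by_cases hb : i = b
      · simp [hb, hab.symm, fin_two_eq_one_sub_of_ne f.2]
      · simp [ha, hb]
  right_inv x := by
    ext i
    · simp [i.2.1, i.2.2]
    · simp

lemma sum_funNeEquiv (hab : a ≠ b) (f : {f : α → Fin 2 // f a ≠ f b}) :
    ∑ i, (f.1 i : ℕ) = ∑ i, ((funNeEquiv hab f).1 i : ℕ) + 1 := by
  rw [sum_eq_add_add_sum_ne hab, fin_two_val_add_val_of_ne f.2, add_comm]
  rfl

lemma card_fin_two_fun_sum_eq_and_ne (hab : a ≠ b) {k : ℕ} (hk : 1 ≤ k) :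
    Fintype.card {f : α → Fin 2 // ∑ i, (f i : ℕ) = k ∧ f a ≠ f b} =
      2 * (Fintype.card α - 2).choose (k - 1) := by
  have e : {f : α → Fin 2 // ∑ i, (f i : ℕ) = k ∧ f a ≠ f b} ≃
      {g : {i // i ≠ a ∧ i ≠ b} → Fin 2 // ∑ i, (g i : ℕ) = k - 1} × Fin 2 :=
    (Equiv.subtypeEquivRight fun _ => and_comm).trans <|
      (Equiv.subtypeSubtypeEquivSubtypeInter _ _).symm.trans <|
        (Equiv.subtypeEquiv (funNeEquiv hab) fun f => by
          rw [sum_funNeEquiv hab f]; omega).trans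
          Equiv.prodSubtypeFstEquivSubtypeProd
  rw [Fintype.card_congr e, Fintype.card_prod, card_fin_two_fun_sum_eq, card_ne_and_ne hab,
    Fintype.card_fin, mul_comm]

end Counting

section Hopping

variable {n : ℕ} {p q : Fin n}

lemma flipBit_apply_self (b : QState n) : flipBit p b p = 1 - b p := by
  simp [flipBit]

lemma flipBit_apply_of_ne {i : Fin n} (h : i ≠ p) (b : QState n) : flipBit p b i = b i := by
  simp [flipBit, h]

lemma flipBit_flipBit_apply_left (hpq : p ≠ q) (b : QState n) :
    flipBit p (flipBit q b) p = 1 - b p := by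
  rw [flipBit_apply_self, flipBit_apply_of_ne hpq]

lemma flipBit_flipBit_apply_right (hpq : p ≠ q) (b : QState n) :
    flipBit p (flipBit q b) q = 1 - b q := by
  rw [flipBit_apply_of_ne hpq.symm, flipBit_apply_self]

lemma flipBit_flipBit_flipBit_flipBit (hpq : p ≠ q) (b : QState n) :
    flipBit p (flipBit q (flipBit p (flipBit q b))) = b := by
  funext i
  by_cases hp : i = p
  · subst hp; rw [flipBit_flipBit_apply_left hpq, flipBit_flipBit_apply_left hpq, sub_sub_cancel]
  by_cases hq : i = q
  · subst hq; rw [flipBit_flipBit_apply_right hpq, flipBit_flipBit_apply_right hpq, sub_sub_cancel]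
  simp only [flipBit_apply_of_ne hp, flipBit_apply_of_ne hq]

lemma wt_flipBit_flipBit (hpq : p ≠ q) {b : QState n} (hb : b p ≠ b q) :
    wt (flipBit p (flipBit q b)) = wt b := by
  have hb' : flipBit p (flipBit q b) p ≠ flipBit p (flipBit q b) q := by
    rwa [flipBit_flipBit_apply_left hpq, flipBit_flipBit_apply_right hpq, Ne, sub_right_inj]
  rw [wt, wt, sum_eq_add_add_sum_ne hpq, sum_eq_add_add_sum_ne hpq, fin_two_val_add_val_of_ne hb,
    fin_two_val_add_val_of_ne hb']
  congr 1
  refine Finset.sum_congr rfl fun i _ => ?_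
  rw [flipBit_apply_of_ne i.2.1, flipBit_apply_of_ne i.2.2]

lemma eq_flipBit_flipBit_and_ne_comm (hpq : p ≠ q) {b b' : QState n}
    (h : b = flipBit p (flipBit q b') ∧ b' p ≠ b' q) :
    b' = flipBit p (flipBit q b) ∧ b p ≠ b q := by
  obtain ⟨rfl, hne⟩ := h
  refine ⟨(flipBit_flipBit_flipBit_flipBit hpq b').symm, ?_⟩
  rwa [flipBit_flipBit_apply_left hpq, flipBit_flipBit_apply_right hpq, Ne, sub_right_inj]

lemma opR_apply (hpq : p ≠ q) (b b' : QState n) :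
    opR p q b b' = if b = flipBit p (flipBit q b') ∧ b' p ≠ b' q then 1 else 0 := by
  have hXX : (pauliX p * pauliX q) b b' = if b = flipBit p (flipBit q b') then 1 else 0 := by
    simp [Matrix.mul_apply, pauliX]
  have hYY : (pauliY p * pauliY q) b b' =
      if b = flipBit p (flipBit q b') then (if b' p = b' q then -1 else 1) else 0 := by
    simp only [Matrix.mul_apply, pauliY, of_apply, flipBit_apply_of_ne hpq, mul_ite, ite_mul,
      mul_zero, zero_mul, Finset.sum_ite_eq', Finset.mem_univ, if_true]
    rcases Fin.exists_fin_two.mp ⟨b' p, rfl⟩ with hp | hp <;>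
      rcases Fin.exists_fin_two.mp ⟨b' q, rfl⟩ with hq | hq <;> simp [hp, hq]
  rw [opR, Matrix.smul_apply, Matrix.add_apply, hXX, hYY]
  by_cases hflip : b = flipBit p (flipBit q b') <;> by_cases hbits : b' p = b' q <;>
    norm_num [hflip, hbits]

end Hopping

section Restriction

variable {n : ℕ} {p q : Fin n}

lemma opR_apply_comm (hpq : p ≠ q) (b b' : QState n) : opR p q b' b = opR p q b b' := by
  rw [opR_apply hpq, opR_apply hpq]
  exact if_congr ⟨eq_flipBit_flipBit_and_ne_comm hpq, eq_flipBit_flipBit_and_ne_comm hpq⟩ rfl rfl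

variable (k : ℕ)

lemma restrict_opR_apply (hpq : p ≠ q) (x y : HWBasis n k) :
    restrict k (opR p q) x y =
      if y.1 = flipBit p (flipBit q x.1) ∧ x.1 p ≠ x.1 q then 1 else 0 := by
  rw [restrict, of_apply, ← opR_apply_comm hpq, opR_apply hpq]

lemma trace_restrict_opR_eq_zero (hpq : p ≠ q) : trace (restrict k (opR p q)) = 0 := by
  refine Finset.sum_eq_zero fun x _ => ?_
  rw [diag_apply, restrict_opR_apply k hpq, if_neg]
  rintro ⟨hx, -⟩
  have hxp := congrFun hx p
  rw [flipBit_flipBit_apply_left hpq] at hxp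
  exact fin_two_one_sub_ne_self _ hxp.symm

lemma sum_restrict_opR_row (hpq : p ≠ q) (x : HWBasis n k) :
    ∑ y, restrict k (opR p q) x y = if x.1 p ≠ x.1 q then 1 else 0 := by
  by_cases hx : x.1 p ≠ x.1 q
  · let y₀ : HWBasis n k := ⟨flipBit p (flipBit q x.1), (wt_flipBit_flipBit hpq hx).trans x.2⟩
    have hy₀ : ∀ y, (y.1 = flipBit p (flipBit q x.1) ∧ x.1 p ≠ x.1 q) ↔ y = y₀ := fun y => by
      simp [hx, y₀, Subtype.ext_iff]
    simp only [restrict_opR_apply k hpq, hy₀, Finset.sum_ite_eq', Finset.mem_univ, if_true,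
      if_pos hx]
  · simp [restrict_opR_apply k hpq, hx]

lemma trace_restrict_opR_mul_self (hpq : p ≠ q) (hk : 1 ≤ k) :
    trace (restrict k (opR p q) * restrict k (opR p q)) = 2 * ((n - 2).choose (k - 1) : ℂ) := by
  have hdiag : ∀ x, (restrict k (opR p q) * restrict k (opR p q)) x x =
      ∑ y, restrict k (opR p q) x y := fun x => by
    refine Finset.sum_congr rfl fun y _ => ?_
    change opR p q x.1 y.1 * opR p q y.1 x.1 = opR p q x.1 y.1
    rw [opR_apply_comm hpq x.1 y.1, opR_apply hpq]
    split_ifs <;> simp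
  have hcard : Fintype.card {x : HWBasis n k // x.1 p ≠ x.1 q} = 2 * (n - 2).choose (k - 1) := by
    simpa using (Fintype.card_congr (Equiv.subtypeSubtypeEquivSubtypeInter
      (fun b : QState n => wt b = k) (fun b => b p ≠ b q))).trans
        (card_fin_two_fun_sum_eq_and_ne hpq hk)
  simp only [trace, diag_apply, hdiag, sum_restrict_opR_row k hpq, Finset.sum_boole]
  rw [← Fintype.card_subtype, hcard]
  push_cast
  ring

end Restriction

lemma choose_sub_two_pred_eq {K : Type*} [Field K] [CharZero K] {n k : ℕ} (hn : 2 ≤ n)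
    (hk1 : 1 ≤ k) (hk2 : k ≤ n) :
    ((n - 2).choose (k - 1) : K) = k * (n - k) / (n * (n - 1)) * n.choose k := by
  obtain ⟨m, rfl⟩ : ∃ m, n = m + 2 := ⟨n - 2, by omega⟩
  obtain ⟨j, rfl⟩ : ∃ j, k = j + 1 := ⟨k - 1, by omega⟩
  have h₁ : ((m : K) + 1) * m.choose j = (m + 1).choose (j + 1) * (j + 1) := by
    exact_mod_cast Nat.add_one_mul_choose_eq m j
  have h₂ : ((m + 1).choose (j + 1) : K) * (m + 2) = (m + 2).choose (j + 1) * (m + 1 - j) := by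
    have h := congrArg (Nat.cast : ℕ → K) (Nat.choose_mul_succ_eq (m + 1) (j + 1))
    push_cast [Nat.sub_sub_sub_cancel_right, Nat.cast_sub (by omega : j ≤ m + 1)] at h
    linear_combination h
  have hne : ((m : K) + 2) * (m + 2 - 1) ≠ 0 := by
    refine mul_ne_zero ?_ ?_ <;> norm_num [add_sub_assoc] <;> norm_cast
  push_cast [Nat.add_sub_cancel]
  rw [div_mul_eq_mul_div, eq_div_iff hne]
  linear_combination (m + 2 : K) * h₁ + (j + 1 : K) * h₂

/-- Traces of the restriction of `R_{pq}` to the Hamming-weight-`k` subspace: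
`Tr(R̃_{pq}) = 0` and `Tr(R̃_{pq}²) = 2·C(n−2,k−1) = (2k(n−k)/(n(n−1)))·C(n,k)`. -/
theorem trace_restrict_opR (n k : ℕ) (hn : 2 ≤ n) (hk1 : 1 ≤ k) (hk2 : k ≤ n - 1)
    (p q : Fin n) (hpq : p ≠ q) :
    Matrix.trace (restrict k (opR p q)) = 0 ∧
    Matrix.trace (restrict k (opR p q) * restrict k (opR p q)) =
      2 * (((n - 2).choose (k - 1) : ℕ) : ℂ) ∧
    Matrix.trace (restrict k (opR p q) * restrict k (opR p q)) =
      2 * (k : ℂ) * ((n : ℂ) - (k : ℂ)) / ((n : ℂ) * ((n : ℂ) - 1)) * ((n.choose k : ℕ) : ℂ) := by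
  have hsq := trace_restrict_opR_mul_self k hpq hk1
  refine ⟨trace_restrict_opR_eq_zero k hpq, hsq, ?_⟩
  rw [hsq, choose_sub_two_pred_eq hn hk1 (by omega)]
  ring

end
end

section
/- For every n ≥ 2 and every k with 1 ≤ k ≤ n−1, the dynamical Lie algebra generated on the Hamming-weight-k subspace H_{n,k} by the generator set {J̃_{pq} : p, q ∈ {0,…,n−1}, p ≠ q} has real dimension d_k(d_k − 1)/2, where d_k = C(n,k). -/
open Matrix Complex

noncomputable section

attribute [local instance 100] LieRing.ofAssociativeRing

/-! In the computational basis of `H_{n,k}` every `i·J̃_{pq}` is a real antisymmetric matrix, a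
sum of hops `E_{σv,v} - E_{v,σv}`, where `σ` swaps qubits `p` and `q` and `v` runs over the
states with `v_p = 0`, `v_q = 1`. Hence the DLA lies in `so(d_k)`, the real span of the
`E_{uv} - E_{vu}`, of dimension `d_k(d_k-1)/2`.

Conversely, write `B_{pq}` for such a hop sum restricted to states agreeing with a fixed
assignment on some qubits. For a third qubit `a`, `[B_{pa}, B_{aq}] = B_{pq}|_{a=0} - B_{pq}|_{a=1}`
while `B_{pq} = B_{pq}|_{a=0} + B_{pq}|_{a=1}`, so conditioning on the other qubits one at a time
isolates every single hop in the DLA. Single hops connect any two weight-`k` states, and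
`[E_{uw} - E_{wu}, E_{wv} - E_{vw}] = E_{uv} - E_{vu}` for distinct `u, w, v` then produces all
of `so(d_k)`. -/

namespace Matrix

variable {ι R : Type*} [DecidableEq ι] [CommRing R]

def skewUnit (i j : ι) : Matrix ι ι R := single i j 1 - single j i 1

lemma skewUnit_self (i : ι) : (skewUnit i i : Matrix ι ι R) = 0 := sub_self _

lemma skewUnit_swap (i j : ι) : (skewUnit j i : Matrix ι ι R) = -skewUnit i j :=
  (neg_sub _ _).symm

lemma skewUnit_apply (i j a b : ι) :
    (skewUnit i j : Matrix ι ι R) a b =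
      (if i = a ∧ j = b then 1 else 0) - (if j = a ∧ i = b then 1 else 0) := by
  simp only [skewUnit, sub_apply, single_apply]

def funMatrix (f : ι → ι) (s : Finset ι) : Matrix ι ι R := ∑ y ∈ s, single (f y) y 1

lemma funMatrix_apply (f : ι → ι) (s : Finset ι) (i j : ι) :
    (funMatrix f s : Matrix ι ι R) i j = if j ∈ s ∧ f j = i then 1 else 0 := by
  simp only [funMatrix, Matrix.sum_apply, single_apply, and_comm (a := f _ = i), ite_and]
  rw [Finset.sum_ite_eq']

lemma funMatrix_congr {f g : ι → ι} {s t : Finset ι} (hst : s = t)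
    (hfg : ∀ y ∈ t, f y = g y) :
    (funMatrix f s : Matrix ι ι R) = funMatrix g t := by
  subst hst
  exact Finset.sum_congr rfl fun y hy => by rw [hfg y hy]

lemma funMatrix_sub_transpose (f : ι → ι) (s : Finset ι) :
    (funMatrix f s - (funMatrix f s)ᵀ : Matrix ι ι R) = ∑ y ∈ s, skewUnit (f y) y := by
  simp only [funMatrix, transpose_sum, transpose_single, skewUnit, Finset.sum_sub_distrib]

variable [Fintype ι]

lemma single_one_mul_single_one (i j k l : ι) :
    (single i j 1 * single k l 1 : Matrix ι ι R) = if j = k then single i l 1 else 0 := by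
  split_ifs with h
  · rw [h, single_mul_single_same, mul_one]
  · simp [h]

lemma lie_skewUnit_skewUnit (a b c d : ι) :
    ⁅skewUnit (R := R) a b, skewUnit (R := R) c d⁆ =
      (if b = c then skewUnit a d else 0) + (if a = d then skewUnit b c else 0) +
        (if b = d then skewUnit c a else 0) + (if a = c then skewUnit d b else 0) := by
  simp only [Ring.lie_def, skewUnit, sub_mul, mul_sub, single_one_mul_single_one]
  simp only [@eq_comm _ d a, @eq_comm _ d b, @eq_comm _ c a, @eq_comm _ c b]
  split_ifs <;> abel

lemma lie_skewUnit_skewUnit_of_ne {u w v : ι} (huw : u ≠ w) (hwv : w ≠ v) (huv : u ≠ v) :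
    ⁅skewUnit (R := R) u w, skewUnit (R := R) w v⁆ = skewUnit u v := by
  simp [lie_skewUnit_skewUnit, huw, hwv, huv]

lemma funMatrix_mul_funMatrix (f g : ι → ι) (s t : Finset ι) :
    (funMatrix f s * funMatrix g t : Matrix ι ι R) =
      funMatrix (f ∘ g) {y ∈ t | g y ∈ s} := by
  simp only [funMatrix, Finset.sum_mul_sum, single_one_mul_single_one]
  rw [Finset.sum_comm, Finset.sum_filter]
  refine Finset.sum_congr rfl fun y _ => ?_
  rw [Finset.sum_ite_eq']
  rfl

lemma funMatrix_mul_transpose_funMatrix {f g : ι → ι} {s t : Finset ι} (h : Disjoint s t) :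
    (funMatrix f s * (funMatrix g t)ᵀ : Matrix ι ι R) = 0 := by
  simp only [funMatrix, transpose_sum, transpose_single, Finset.sum_mul_sum,
    single_one_mul_single_one]
  refine Finset.sum_eq_zero fun x hx => Finset.sum_eq_zero fun y hy => if_neg ?_
  rintro rfl
  exact Finset.disjoint_left.mp h hx hy

lemma transpose_funMatrix_mul_funMatrix {f g : ι → ι} {s t : Finset ι}
    (h : ∀ x ∈ s, ∀ y ∈ t, f x ≠ g y) :
    ((funMatrix f s)ᵀ * funMatrix g t : Matrix ι ι R) = 0 := by
  simp only [funMatrix, transpose_sum, transpose_single, Finset.sum_mul_sum,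
    single_one_mul_single_one]
  exact Finset.sum_eq_zero fun x hx => Finset.sum_eq_zero fun y hy => if_neg (h x hx y hy)

lemma lie_sub_transpose_sub_transpose {A B : Matrix ι ι R} (hAB : A * Bᵀ = 0)
    (hBA : Aᵀ * B = 0) :
    ⁅A - Aᵀ, B - Bᵀ⁆ = (A * B - (A * B)ᵀ) - (B * A - (B * A)ᵀ) := by
  have hAB' : B * Aᵀ = 0 := by simpa [transpose_mul] using congrArg transpose hAB
  have hBA' : Bᵀ * A = 0 := by simpa [transpose_mul] using congrArg transpose hBA
  rw [Ring.lie_def, transpose_mul, transpose_mul]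
  simp only [sub_mul, mul_sub, hAB, hBA, hAB', hBA']
  abel

section Span

variable (K : Type*) [CommRing K] [Algebra K R]

lemma lie_mem_span_skewUnit {x y : Matrix ι ι R}
    (hx : x ∈ Submodule.span K (Set.range fun p : ι × ι => skewUnit p.1 p.2))
    (hy : y ∈ Submodule.span K (Set.range fun p : ι × ι => skewUnit p.1 p.2)) :
    ⁅x, y⁆ ∈ Submodule.span K (Set.range fun p : ι × ι => skewUnit p.1 p.2) := by
  induction hx, hy using Submodule.span_induction₂ with
  | mem_mem x y hx hy =>
    obtain ⟨⟨a, b⟩, rfl⟩ := hx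
    obtain ⟨⟨c, d⟩, rfl⟩ := hy
    dsimp only
    rw [lie_skewUnit_skewUnit]
    refine add_mem (add_mem (add_mem ?_ ?_) ?_) ?_ <;> split_ifs <;>
      first | exact zero_mem _ | exact Submodule.subset_span (Set.mem_range_self (_, _))
  | zero_left => simp
  | zero_right => simp
  | add_left _ _ _ _ _ _ h₁ h₂ => rw [add_lie]; exact add_mem h₁ h₂
  | add_right _ _ _ _ _ _ h₁ h₂ => rw [lie_add]; exact add_mem h₁ h₂
  | smul_left _ _ _ _ _ h => rw [smul_lie]; exact Submodule.smul_mem _ _ h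
  | smul_right _ _ _ _ _ h => rw [lie_smul]; exact Submodule.smul_mem _ _ h

/-- `so(ι)` over `K`, realised inside the `R`-valued matrices. -/
def skewUnitSpan : LieSubalgebra K (Matrix ι ι R) :=
  { Submodule.span K (Set.range fun p : ι × ι => skewUnit p.1 p.2) with
    lie_mem' := lie_mem_span_skewUnit K }

variable {K}

lemma skewUnit_mem_skewUnitSpan (i j : ι) : skewUnit i j ∈ skewUnitSpan (R := R) K :=
  Submodule.subset_span ⟨(i, j), rfl⟩

lemma skewUnit_mem_of_reflTransGen {L : LieSubalgebra K (Matrix ι ι R)} {r : ι → ι → Prop}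
    (hr : ∀ u w, r u w → skewUnit u w ∈ L) {u v : ι} (h : Relation.ReflTransGen r u v) :
    skewUnit u v ∈ L := by
  induction h with
  | refl => rw [skewUnit_self]; exact zero_mem L
  | @tail w v _ hwv ih =>
    by_cases huv : u = v
    · rw [huv, skewUnit_self]; exact zero_mem L
    by_cases huw : u = w
    · rw [huw]; exact hr _ _ hwv
    by_cases hwv' : w = v
    · rwa [← hwv']
    rw [← lie_skewUnit_skewUnit_of_ne huw hwv' huv]
    exact L.lie_mem ih (hr _ _ hwv)

/-- One `E_{ij} - E_{ji}` per unordered pair `i ≠ j`, oriented by `Quot.out`: a basis of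
`skewUnitSpan`. -/
def orientedSkewUnit (z : {z : Sym2 ι // ¬z.IsDiag}) : Matrix ι ι R :=
  skewUnit (Quot.out z.1 : ι × ι).1 (Quot.out z.1 : ι × ι).2

variable (K) in
lemma span_range_orientedSkewUnit :
    Submodule.span K (Set.range (orientedSkewUnit (ι := ι) (R := R))) =
      (skewUnitSpan (R := R) K).toSubmodule := by
  apply le_antisymm
  · rw [Submodule.span_le]
    rintro _ ⟨z, rfl⟩
    exact skewUnit_mem_skewUnitSpan _ _
  · rw [skewUnitSpan, Submodule.span_le]
    rintro _ ⟨⟨i, j⟩, rfl⟩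
    dsimp only
    by_cases hij : i = j
    · rw [hij, skewUnit_self]; exact zero_mem _
    let z : {z : Sym2 ι // ¬z.IsDiag} := ⟨s(i, j), Sym2.mk_isDiag_iff.not.mpr hij⟩
    have hz : s((Quot.out z.1 : ι × ι).1, (Quot.out z.1 : ι × ι).2) = s(i, j) :=
      Quot.out_eq z.1
    have hmem : orientedSkewUnit z ∈ Submodule.span K (Set.range (orientedSkewUnit (R := R))) :=
      Submodule.subset_span (Set.mem_range_self z)
    rcases Sym2.eq_iff.mp hz with ⟨h1, h2⟩ | ⟨h1, h2⟩
    · rwa [orientedSkewUnit, h1, h2] at hmem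
    · rw [orientedSkewUnit, h1, h2, skewUnit_swap] at hmem
      simpa using neg_mem hmem

end Span

section Finrank

variable (K : Type*) [Field K] [Algebra K R] [Nontrivial R]

lemma linearIndependent_orientedSkewUnit :
    LinearIndependent K (orientedSkewUnit (ι := ι) (R := R)) := by
  rw [Fintype.linearIndependent_iff]
  intro g hg z
  have hz : s((Quot.out z.1 : ι × ι).1, (Quot.out z.1 : ι × ι).2) = z.1 := Quot.out_eq z.1
  set a := (Quot.out z.1 : ι × ι).1
  set b := (Quot.out z.1 : ι × ι).2
  have hab : a ≠ b := fun h => z.2 (hz ▸ Sym2.mk_isDiag_iff.mpr h)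
  have entry : ∀ w, orientedSkewUnit w a b = if w = z then (1 : R) else 0 := by
    intro w
    have hw : s((Quot.out w.1 : ι × ι).1, (Quot.out w.1 : ι × ι).2) = w.1 := Quot.out_eq w.1
    rw [orientedSkewUnit, skewUnit_apply]
    by_cases hwz : w = z
    · subst hwz
      rw [if_pos ⟨rfl, rfl⟩, if_neg fun h => hab h.2, if_pos rfl, sub_zero]
    · rw [if_neg hwz, if_neg, if_neg, sub_zero]
      · rintro ⟨h1, h2⟩
        exact hwz (Subtype.ext (by rw [← hw, ← hz, h1, h2, Sym2.eq_swap]))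
      · rintro ⟨h1, h2⟩
        exact hwz (Subtype.ext (by rw [← hw, ← hz, h1, h2]))
  have hgz := congrFun (congrFun hg a) b
  simp only [Matrix.sum_apply, smul_apply, entry, smul_ite, smul_zero, Finset.sum_ite_eq',
    Finset.mem_univ, if_true, zero_apply] at hgz
  exact (smul_eq_zero.mp hgz).resolve_right one_ne_zero

lemma finrank_skewUnitSpan :
    Module.finrank K (skewUnitSpan (ι := ι) (R := R) K) = (Fintype.card ι).choose 2 := by
  have h := finrank_span_eq_card (linearIndependent_orientedSkewUnit (ι := ι) (R := R) K)
  rw [span_range_orientedSkewUnit, Sym2.card_subtype_not_diag] at h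
  exact h

end Finrank

end Matrix

section SwapQubits

variable {n k : ℕ}

lemma wt_comp_perm (b : QState n) (σ : Equiv.Perm (Fin n)) : wt (b ∘ σ) = wt b :=
  Equiv.sum_comp σ fun i => (b i : ℕ)

def swapQubits (p q : Fin n) (b : HWBasis n k) : HWBasis n k :=
  ⟨b.1 ∘ Equiv.swap p q, (wt_comp_perm _ _).trans b.2⟩

@[simp] lemma swapQubits_apply_left (p q : Fin n) (b : HWBasis n k) :
    (swapQubits p q b).1 p = b.1 q := by
  simp [swapQubits]

@[simp] lemma swapQubits_apply_right (p q : Fin n) (b : HWBasis n k) :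
    (swapQubits p q b).1 q = b.1 p := by
  simp [swapQubits]

lemma swapQubits_apply_of_ne {p q i : Fin n} (hp : i ≠ p) (hq : i ≠ q) (b : HWBasis n k) :
    (swapQubits p q b).1 i = b.1 i := by
  simp [swapQubits, Equiv.swap_apply_of_ne_of_ne hp hq]

@[simp] lemma swapQubits_swapQubits (p q : Fin n) (b : HWBasis n k) :
    swapQubits p q (swapQubits p q b) = b := by
  ext1; simp [swapQubits, Function.comp_assoc, ← Equiv.Perm.coe_mul]

lemma swapQubits_comm (p q : Fin n) : swapQubits (k := k) p q = swapQubits q p := by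
  ext1 b; simp [swapQubits, Equiv.swap_comm]

lemma swapQubits_swapQubits_of_apply_eq {p q r : Fin n} (hpq : p ≠ q) (hqr : q ≠ r)
    (hpr : p ≠ r) {b : HWBasis n k} (h : b.1 p = b.1 q) :
    swapQubits p q (swapQubits q r b) = swapQubits p r b := by
  apply Subtype.ext
  funext i
  simp only [swapQubits, Function.comp_apply, Equiv.swap_apply_def]
  split_ifs <;> simp_all

end SwapQubits

section Pauli

variable {n : ℕ}

lemma pauliX_mul_pauliY_apply (p q : Fin n) (b b' : QState n) :
    (pauliX p * pauliY q) b b' =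
      if b = flipBit p (flipBit q b') then (if b' q = 0 then I else -I) else 0 := by
  rw [mul_apply, Finset.sum_eq_single (flipBit q b')]
  · simp only [pauliX, pauliY, of_apply, if_true]
    split_ifs <;> simp
  · intro c _ hc; simp [pauliY, hc]
  · simp

lemma pauliY_mul_pauliX_apply {p q : Fin n} (hpq : p ≠ q) (b b' : QState n) :
    (pauliY p * pauliX q) b b' =
      if b = flipBit p (flipBit q b') then (if b' p = 0 then I else -I) else 0 := by
  rw [mul_apply, Finset.sum_eq_single (flipBit q b')]
  · simp [pauliX, pauliY, flipBit, Function.update_of_ne hpq]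
  · intro c _ hc; simp [pauliX, hc]
  · simp

lemma flipBit_flipBit_eq_comp_swap {p q : Fin n} {b : QState n} (h : b p ≠ b q) :
    flipBit p (flipBit q b) = b ∘ Equiv.swap p q := by
  have hpq : p ≠ q := fun e => h (congrArg b e)
  have hflip : ∀ a c : Fin 2, a ≠ c → 1 - a = c := by decide
  funext i
  by_cases hip : i = p
  · subst hip
    simp [flipBit, Function.update_of_ne hpq, hflip _ _ h]
  by_cases hiq : i = q
  · subst hiq
    simp [flipBit, Function.update_of_ne hip, hflip _ _ h.symm]
  simp [flipBit, Function.update_of_ne hip, Function.update_of_ne hiq,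
    Equiv.swap_apply_of_ne_of_ne hip hiq]

lemma opJ_apply {p q : Fin n} (hpq : p ≠ q) (b b' : QState n) :
    opJ p q b b' = if b = b' ∘ Equiv.swap p q then
      (if b' p = 0 ∧ b' q = 1 then -I else if b' p = 1 ∧ b' q = 0 then I else 0) else 0 := by
  rw [opJ, Matrix.smul_apply, Matrix.sub_apply, pauliX_mul_pauliY_apply,
    pauliY_mul_pauliX_apply hpq, ite_sub_ite, sub_zero, smul_ite, smul_zero]
  by_cases hpq' : b' p = b' q
  · have hcoef : ∀ a : Fin 2, ¬(a = 0 ∧ a = 1) ∧ ¬(a = 1 ∧ a = 0) := by decide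
    simp [hpq', hcoef]
  · rw [flipBit_flipBit_eq_comp_swap hpq']
    refine if_congr Iff.rfl ?_ rfl
    rcases (by omega : b' p = 0 ∨ b' p = 1) with hp | hp <;>
      rcases (by omega : b' q = 0 ∨ b' q = 1) with hq | hq <;>
      simp only [hp, hq] at hpq' ⊢ <;> norm_num <;> ring

end Pauli

section Hopping

variable {n k : ℕ} {R : Type*} [CommRing R]

/-- `i·J̃_{pq}` with the hops `v ↦ σ_{pq} v` restricted to the basis states `v ∈ s`. -/
def hopping (p q : Fin n) (s : Finset (HWBasis n k)) : Matrix (HWBasis n k) (HWBasis n k) R :=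
  ∑ y ∈ s with y.1 p = 0 ∧ y.1 q = 1, skewUnit (swapQubits p q y) y

def hopMatrix (p q : Fin n) (s : Finset (HWBasis n k)) : Matrix (HWBasis n k) (HWBasis n k) R :=
  funMatrix (swapQubits p q) {y ∈ s | y.1 p = 0 ∧ y.1 q = 1}

lemma hopping_eq_hopMatrix_sub_transpose (p q : Fin n) (s : Finset (HWBasis n k)) :
    (hopping p q s : Matrix _ _ R) = hopMatrix p q s - (hopMatrix p q s)ᵀ :=
  (funMatrix_sub_transpose _ _).symm

lemma hopping_univ_apply (p q : Fin n) (x z : HWBasis n k) :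
    (hopping p q Finset.univ : Matrix _ _ R) x z =
      if x = swapQubits p q z then
        (if z.1 p = 0 ∧ z.1 q = 1 then 1 else if z.1 p = 1 ∧ z.1 q = 0 then -1 else 0)
      else 0 := by
  rw [hopping_eq_hopMatrix_sub_transpose, Matrix.sub_apply, transpose_apply, hopMatrix,
    funMatrix_apply, funMatrix_apply]
  by_cases hxz : x = swapQubits p q z
  · subst hxz
    simp only [swapQubits_swapQubits, and_true, if_true]
    split_ifs <;> simp_all
  · have hzx : swapQubits p q x ≠ z := fun h => hxz (by rw [← h, swapQubits_swapQubits])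
    simp [if_neg hxz, Ne.symm hxz, hzx]

lemma I_smul_restrict_opJ {p q : Fin n} (hpq : p ≠ q) :
    I • restrict k (opJ p q) = hopping p q Finset.univ := by
  ext x z
  rw [Matrix.smul_apply, restrict, of_apply, opJ_apply hpq, hopping_univ_apply, smul_eq_mul,
    mul_ite, mul_zero]
  refine if_congr (Subtype.ext_iff (a1 := x) (a2 := swapQubits p q z)).symm ?_ rfl
  split_ifs <;> simp

lemma hopMatrix_mul_hopMatrix {p q r : Fin n} (hpq : p ≠ q) (hqr : q ≠ r) (hpr : p ≠ r)
    {s : Finset (HWBasis n k)} (hs : ∀ y, swapQubits q r y ∈ s ↔ y ∈ s) :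
    (hopMatrix p q s * hopMatrix q r s : Matrix _ _ R) = hopMatrix p r {y ∈ s | y.1 q = 0} := by
  rw [hopMatrix, hopMatrix, hopMatrix, funMatrix_mul_funMatrix]
  refine funMatrix_congr ?_ fun y hy => ?_
  · ext y
    simp only [Finset.mem_filter, swapQubits_apply_of_ne hpq hpr, hs, swapQubits_apply_left]
    tauto
  · simp only [Finset.mem_filter] at hy
    exact swapQubits_swapQubits_of_apply_eq hpq hqr hpr (hy.2.1.trans hy.1.2.symm)

lemma hopMatrix_mul_hopMatrix_rev {p q r : Fin n} (hpq : p ≠ q) (hqr : q ≠ r) (hpr : p ≠ r)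
    {s : Finset (HWBasis n k)} (hs : ∀ y, swapQubits p q y ∈ s ↔ y ∈ s) :
    (hopMatrix q r s * hopMatrix p q s : Matrix _ _ R) = hopMatrix p r {y ∈ s | y.1 q = 1} := by
  rw [hopMatrix, hopMatrix, hopMatrix, funMatrix_mul_funMatrix]
  refine funMatrix_congr ?_ fun y hy => ?_
  · ext y
    simp only [Finset.mem_filter, swapQubits_apply_of_ne hpr.symm hqr.symm, hs,
      swapQubits_apply_right]
    tauto
  · simp only [Finset.mem_filter] at hy
    rw [Function.comp_apply, swapQubits_comm q r, swapQubits_comm p q, swapQubits_comm p r]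
    exact swapQubits_swapQubits_of_apply_eq hqr.symm hpq.symm hpr.symm (hy.2.2.trans hy.1.2.symm)

lemma hopMatrix_mul_transpose_hopMatrix (p q r : Fin n) (s : Finset (HWBasis n k)) :
    (hopMatrix p q s * (hopMatrix q r s)ᵀ : Matrix _ _ R) = 0 :=
  funMatrix_mul_transpose_funMatrix
    (Finset.disjoint_filter.mpr fun y _ h h' => by simp [h.2] at h')

lemma transpose_hopMatrix_mul_hopMatrix (p q r : Fin n) (s : Finset (HWBasis n k)) :
    ((hopMatrix p q s)ᵀ * hopMatrix q r s : Matrix _ _ R) = 0 := by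
  refine transpose_funMatrix_mul_funMatrix fun x hx y hy h => ?_
  simp only [Finset.mem_filter] at hx hy
  have := congrArg (fun b : HWBasis n k => b.1 q) h
  simp [hx.2.1, hy.2.2] at this

lemma lie_hopping {p q r : Fin n} (hpq : p ≠ q) (hqr : q ≠ r) (hpr : p ≠ r)
    {s : Finset (HWBasis n k)} (hs_pq : ∀ y, swapQubits p q y ∈ s ↔ y ∈ s)
    (hs_qr : ∀ y, swapQubits q r y ∈ s ↔ y ∈ s) :
    ⁅hopping (R := R) p q s, hopping (R := R) q r s⁆ =
      hopping p r {y ∈ s | y.1 q = 0} - hopping p r {y ∈ s | y.1 q = 1} := by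
  simp only [hopping_eq_hopMatrix_sub_transpose]
  rw [lie_sub_transpose_sub_transpose (hopMatrix_mul_transpose_hopMatrix p q r s)
    (transpose_hopMatrix_mul_hopMatrix p q r s), hopMatrix_mul_hopMatrix hpq hqr hpr hs_qr,
    hopMatrix_mul_hopMatrix_rev hpq hqr hpr hs_pq]

lemma hopping_filter_add_hopping_filter (p q a : Fin n) (s : Finset (HWBasis n k)) :
    (hopping p q {y ∈ s | y.1 a = 0} + hopping p q {y ∈ s | y.1 a = 1} : Matrix _ _ R) =
      hopping p q s := by
  have h1 : ∀ y : HWBasis n k, y.1 a = 1 ↔ ¬y.1 a = 0 := fun y => by omega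
  simp only [hopping, Finset.filter_filter, h1]
  rw [← Finset.sum_filter_add_sum_filter_not {y ∈ s | y.1 p = 0 ∧ y.1 q = 1} (·.1 a = 0),
    Finset.filter_filter, Finset.filter_filter]
  congr 2 <;> ext y <;> simp only [Finset.mem_filter] <;> tauto

def agreeOn (T : Finset (Fin n)) (c : QState n) : Finset (HWBasis n k) :=
  {y | ∀ t ∈ T, y.1 t = c t}

lemma swapQubits_mem_agreeOn {T : Finset (Fin n)} {c : QState n} {p q : Fin n} (hp : p ∉ T)
    (hq : q ∉ T) (y : HWBasis n k) : swapQubits p q y ∈ agreeOn T c ↔ y ∈ agreeOn T c := by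
  simp only [agreeOn, Finset.mem_filter, Finset.mem_univ, true_and]
  refine forall₂_congr fun t ht => ?_
  rw [swapQubits_apply_of_ne (ne_of_mem_of_not_mem ht hp) (ne_of_mem_of_not_mem ht hq)]

lemma agreeOn_insert (a : Fin n) (T : Finset (Fin n)) (c : QState n) :
    (agreeOn (insert a T) c : Finset (HWBasis n k)) = {y ∈ agreeOn T c | y.1 a = c a} := by
  ext y
  simp only [agreeOn, Finset.mem_filter, Finset.mem_univ, true_and, Finset.forall_mem_insert]
  tauto

lemma hopping_agreeOn_eq_skewUnit {p q : Fin n} {v : HWBasis n k} (hp : v.1 p = 0)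
    (hq : v.1 q = 1) :
    hopping p q (agreeOn (Finset.univ \ {p, q}) v.1) =
      (skewUnit (swapQubits p q v) v : Matrix _ _ R) := by
  have hsingle : {y ∈ agreeOn (Finset.univ \ {p, q}) v.1 | y.1 p = 0 ∧ y.1 q = 1} = {v} := by
    ext y
    simp only [agreeOn, Finset.mem_filter, Finset.mem_univ, true_and, Finset.mem_sdiff,
      Finset.mem_insert, Finset.mem_singleton, not_or]
    constructor
    · rintro ⟨hy, hyp, hyq⟩
      ext1; funext i
      by_cases hip : i = p
      · rw [hip, hyp, hp]
      by_cases hiq : i = q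
      · rw [hiq, hyq, hq]
      exact hy i ⟨hip, hiq⟩
    · rintro rfl
      exact ⟨fun _ _ => rfl, hp, hq⟩
  rw [hopping, hsingle, Finset.sum_singleton]

variable {K : Type*} [Field K] [CharZero K] [Algebra K R]
  {L : LieSubalgebra K (Matrix (HWBasis n k) (HWBasis n k) R)}

lemma hopping_agreeOn_mem (hL : ∀ p q : Fin n, p ≠ q → hopping p q Finset.univ ∈ L)
    (T : Finset (Fin n)) (c : QState n) {p q : Fin n} (hpq : p ≠ q) (hp : p ∉ T)
    (hq : q ∉ T) :
    hopping p q (agreeOn T c) ∈ L := by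
  induction T using Finset.induction_on generalizing p q with
  | empty =>
    convert hL p q hpq
    ext y; simp [agreeOn]
  | insert a T ha ih =>
    obtain ⟨hpa, hp⟩ := not_or.mp (Finset.mem_insert.not.mp hp)
    obtain ⟨hqa, hq⟩ := not_or.mp (Finset.mem_insert.not.mp hq)
    have hX := ih hpq hp hq
    have hY := L.lie_mem (ih hpa hp ha) (ih (Ne.symm hqa) ha hq)
    rw [lie_hopping hpa (Ne.symm hqa) hpq (swapQubits_mem_agreeOn hp ha)
      (swapQubits_mem_agreeOn ha hq)] at hY
    rw [← hopping_filter_add_hopping_filter p q a] at hX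
    rw [agreeOn_insert]
    rcases (by omega : c a = 0 ∨ c a = 1) with h | h <;> rw [h]
    · convert L.smul_mem (1 / 2 : K) (L.add_mem hX hY) using 1
      module
    · convert L.smul_mem (1 / 2 : K) (L.sub_mem hX hY) using 1
      module

lemma skewUnit_swapQubits_mem (hL : ∀ p q : Fin n, p ≠ q → hopping p q Finset.univ ∈ L)
    {p q : Fin n} {v : HWBasis n k} (hp : v.1 p = 0) (hq : v.1 q = 1) :
    skewUnit (swapQubits p q v) v ∈ L := by
  have hpq : p ≠ q := by rintro rfl; rw [hp] at hq; exact zero_ne_one hq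
  rw [← hopping_agreeOn_eq_skewUnit hp hq]
  exact hopping_agreeOn_mem hL _ _ hpq (by simp) (by simp)

end Hopping

section Connectivity

variable {n k : ℕ}

lemma exists_apply_eq_zero_and_apply_eq_one {u v : QState n} (hw : wt u = wt v) (huv : u ≠ v) :
    ∃ i, u i = 0 ∧ v i = 1 := by
  by_contra! h
  have hle : ∀ a b : Fin 2, (a = 0 → b ≠ 1) → (b : ℕ) ≤ a := by decide
  have hlt : ∀ a b : Fin 2, (a = 0 → b ≠ 1) → a ≠ b → (b : ℕ) < a := by decide
  obtain ⟨j, hj⟩ := Function.ne_iff.mp huv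
  have : wt v < wt u := Finset.sum_lt_sum (fun i _ => hle _ _ (h i))
    ⟨j, Finset.mem_univ j, hlt _ _ (h j) hj⟩
  omega

lemma hammingDist_swapQubits_lt {u v : HWBasis n k} {p q : Fin n} (hup : u.1 p = 1)
    (hvp : v.1 p = 0) (huq : u.1 q = 0) (hvq : v.1 q = 1) :
    hammingDist (swapQubits p q u).1 v.1 < hammingDist u.1 v.1 := by
  refine Finset.card_lt_card ((Finset.ssubset_iff_of_subset fun i => ?_).mpr ⟨p, ?_, ?_⟩)
  · simp only [Finset.mem_filter, Finset.mem_univ, true_and]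
    by_cases hip : i = p
    · subst hip; simp [huq, hvp]
    by_cases hiq : i = q
    · subst hiq; simp [hup, hvq]
    rw [swapQubits_apply_of_ne hip hiq]
    exact id
  · simp [hup, hvp]
  · simp [huq, hvp]

lemma reflTransGen_swapQubits (u v : HWBasis n k) :
    Relation.ReflTransGen
      (fun u w : HWBasis n k => ∃ p q, w.1 p = 0 ∧ w.1 q = 1 ∧ u = swapQubits p q w) u v := by
  induction hd : hammingDist u.1 v.1 using Nat.strong_induction_on generalizing u with
  | _ d ih =>
  by_cases huv : u = v
  · rw [huv]
  have hne : u.1 ≠ v.1 := fun h => huv (Subtype.ext h)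
  obtain ⟨q, huq, hvq⟩ := exists_apply_eq_zero_and_apply_eq_one (u.2.trans v.2.symm) hne
  obtain ⟨p, hvp, hup⟩ := exists_apply_eq_zero_and_apply_eq_one (v.2.trans u.2.symm) hne.symm
  refine .head ⟨p, q, by simp [huq], by simp [hup], (swapQubits_swapQubits p q u).symm⟩
    (ih _ ?_ _ rfl)
  rw [← hd]
  exact hammingDist_swapQubits_lt hup hvp huq hvq

end Connectivity

section Counting

open Finset

lemma wt_eq_card {n : ℕ} (b : QState n) : wt b = #{i | b i = 1} := by
  have hval : ∀ a : Fin 2, (a : ℕ) = if a = 1 then 1 else 0 := by decide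
  rw [wt, Finset.card_filter]
  exact Finset.sum_congr rfl fun i _ => hval (b i)

def hwBasisEquiv (n k : ℕ) : HWBasis n k ≃ {s : Finset (Fin n) // #s = k} where
  toFun b := ⟨({i | b.1 i = 1} : Finset (Fin n)), (wt_eq_card b.1).symm.trans b.2⟩
  invFun s := ⟨fun i => if i ∈ s.1 then 1 else 0, by
    rw [wt_eq_card]; convert s.2 using 2; ext i; simp⟩
  left_inv b := by
    have hb : ∀ a : Fin 2, (if a = 1 then 1 else 0) = a := by decide
    ext1; funext i; simp [hb]
  right_inv s := by ext1; ext i; simp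

lemma card_hwBasis (n k : ℕ) : Fintype.card (HWBasis n k) = n.choose k := by
  rw [Fintype.card_congr (hwBasisEquiv n k), Fintype.card_finset_len, Fintype.card_fin]

end Counting

section Generators

variable {n k : ℕ}

lemma skewUnitSpan_le_of_hopping_mem {K R : Type*} [Field K] [CharZero K] [CommRing R]
    [Algebra K R] {L : LieSubalgebra K (Matrix (HWBasis n k) (HWBasis n k) R)}
    (hL : ∀ p q : Fin n, p ≠ q → hopping p q Finset.univ ∈ L) : skewUnitSpan K ≤ L := by
  change Submodule.span K _ ≤ L.toSubmodule
  rw [Submodule.span_le]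
  rintro _ ⟨⟨u, v⟩, rfl⟩
  refine skewUnit_mem_of_reflTransGen (fun u w ⟨p, q, hp, hq, hu⟩ => ?_)
    (reflTransGen_swapQubits u v)
  rw [hu]
  exact skewUnit_swapQubits_mem hL hp hq

lemma DLA_restrict_opJ_eq_skewUnitSpan :
    DLA {M : Matrix (HWBasis n k) (HWBasis n k) ℂ |
        ∃ p q : Fin n, p ≠ q ∧ M = restrict k (opJ p q)} = skewUnitSpan ℝ := by
  apply le_antisymm
  · rw [DLA, LieSubalgebra.lieSpan_le]
    rintro _ ⟨M, ⟨p, q, hpq, rfl⟩, rfl⟩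
    change I • restrict k (opJ p q) ∈ skewUnitSpan ℝ
    rw [I_smul_restrict_opJ hpq, hopping]
    exact Submodule.sum_mem _ fun _ _ => skewUnit_mem_skewUnitSpan _ _
  · refine skewUnitSpan_le_of_hopping_mem fun p q hpq => ?_
    rw [← I_smul_restrict_opJ hpq]
    exact LieSubalgebra.subset_lieSpan ⟨_, ⟨p, q, hpq, rfl⟩, rfl⟩

end Generators

theorem dla_J_dim_general (n k : ℕ) :
    dlaDim {M : Matrix (HWBasis n k) (HWBasis n k) ℂ |
        ∃ p q : Fin n, p ≠ q ∧ M = restrict k (opJ p q)} =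
      n.choose k * (n.choose k - 1) / 2 := by
  rw [dlaDim, DLA_restrict_opJ_eq_skewUnitSpan, finrank_skewUnitSpan, card_hwBasis,
    Nat.choose_two_right]

/-- The DLA generated by all `J̃_{pq}` has dimension `d_k(d_k−1)/2` (type III). -/
theorem dla_J_dim (n k : ℕ) (hn : 2 ≤ n) (hk1 : 1 ≤ k) (hk2 : k ≤ n - 1) :
    dlaDim {M : Matrix (HWBasis n k) (HWBasis n k) ℂ |
        ∃ p q : Fin n, p ≠ q ∧ M = restrict k (opJ p q)} =
      n.choose k * (n.choose k - 1) / 2 :=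
  dla_J_dim_general n k

end
end

section
/- Let n ≥ 3 and 1 ≤ k ≤ n−1, and set k' = min(k, n−k). The dynamical Lie algebra generated on the Hamming-weight-k subspace H_{n,k} by the generator set {Ẽ_{pq}, S̃_{pq} : p, q ∈ {0,…,n−1}, p ≠ q} has real dimension n if k' = 1, and n(n−1)/2 if k' > 1. -/
open Matrix Complex

noncomputable section

attribute [local instance] LieRing.ofAssociativeRing

/-! All generators are diagonal in the computational basis, so the DLA is abelian and equals
their real span. Identify a weight-`k` basis state with the `k`-set `A` of its 1-positions and
put `x_p = [p ∈ A]`. The diagonals are `E_pq = x_p + x_q - 2 x_p x_q` and `S_pq = x_q - x_p`,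
and summing them over `q` (using `∑ x_p = k`) puts `1`, every `x_p` and every `x_p x_q` into the
span, which is therefore the space of functions of degree at most two on the `k`-sets.
For `min(k, n - k) = 1` there are only `n` points and this is everything. Otherwise the
`n(n-1)/2` products `x_p x_q` are a basis: if `∑ g_{pq} x_p x_q` vanishes on every `k`-set,
exchanging one element of a `k`-set shows `g_{rq} = g_{xq}`, so `g` is constant, hence zero. -/

namespace Finset

variable {α M : Type*} [DecidableEq α]

lemma sum_powersetCard_two_insert [AddCommMonoid M] (g : Finset α → M) {r : α} {B : Finset α}
    (hr : r ∉ B) :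
    ∑ e ∈ (insert r B).powersetCard 2, g e = ∑ e ∈ B.powersetCard 2, g e + ∑ q ∈ B, g {r, q} := by
  rw [powersetCard_succ_insert hr, sum_union, sum_image, powersetCard_one, sum_map]
  · rfl
  · intro s hs t ht hst
    rw [mem_coe, mem_powersetCard] at hs ht
    rw [← erase_insert (fun h => hr (hs.1 h)), hst, erase_insert (fun h => hr (ht.1 h))]
  · rw [disjoint_right]
    simp only [mem_image, mem_powersetCard]
    rintro _ ⟨s, -, rfl⟩ h
    exact hr (h.1 (mem_insert_self r s))

variable [AddCommGroup M] [IsAddTorsionFree M]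

lemma eq_zero_of_forall_sum_card_eq_zero {s : Finset α} {m : ℕ} (d : α → M) (hm : 0 < m)
    (hms : m < #s) (h : ∀ B ⊆ s, #B = m → ∑ q ∈ B, d q = 0) {q : α} (hq : q ∈ s) : d q = 0 := by
  have hconst : ∀ q' ∈ s, d q' = d q := by
    intro q' hq'
    rcases eq_or_ne q' q with rfl | hne
    · rfl
    obtain ⟨B, hB, hBcard⟩ := exists_subset_card_eq (s := (s.erase q).erase q') (n := m - 1)
      (by rw [card_erase_of_mem (mem_erase.mpr ⟨hne, hq'⟩), card_erase_of_mem hq]; omega)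
    have hq'B : q' ∉ B := fun h => by simpa using hB h
    have hqB : q ∉ B := fun h => by simpa using (mem_erase.mp (hB h)).2
    have hsub : ∀ x ∈ s, insert x B ⊆ s := fun x hx =>
      insert_subset hx (hB.trans ((erase_subset _ _).trans (erase_subset _ _)))
    have h1 := h _ (hsub q' hq') (by rw [card_insert_of_notMem hq'B]; omega)
    have h2 := h _ (hsub q hq) (by rw [card_insert_of_notMem hqB]; omega)
    rw [sum_insert hq'B] at h1
    rw [sum_insert hqB] at h2
    exact add_right_cancel (h1.trans h2.symm)
  obtain ⟨B, hB, hBcard⟩ := exists_subset_card_eq hms.le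
  have := h B hB hBcard
  rw [sum_congr rfl fun q' hq' => hconst q' (hB hq'), sum_const, hBcard] at this
  exact (nsmul_eq_zero_iff_right hm.ne').mp this

variable [Fintype α]

lemma pair_eq_pair_of_sum_powersetCard_two_eq_zero (g : Finset α → M) {k : ℕ} (hk : 2 ≤ k)
    (hkn : k + 2 ≤ Fintype.card α) (h : ∀ A : Finset α, #A = k → ∑ e ∈ A.powersetCard 2, g e = 0)
    {r x q : α} (hqr : q ≠ r) (hqx : q ≠ x) : g {r, q} = g {x, q} := by
  rcases eq_or_ne r x with rfl | hrx
  · rfl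
  set s := (univ.erase r).erase x
  have hs : #s = Fintype.card α - 2 := by
    rw [card_erase_of_mem (mem_erase.mpr ⟨hrx.symm, mem_univ x⟩), card_erase_of_mem (mem_univ r),
      card_univ]
    omega
  have hrs : r ∉ s := fun h => by simp [s] at h
  have hxs : x ∉ s := fun h => by simp [s] at h
  suffices g {r, q} - g {x, q} = 0 from sub_eq_zero.mp this
  refine eq_zero_of_forall_sum_card_eq_zero (s := s) (m := k - 1) (fun q => g {r, q} - g {x, q})
    (by omega) (by omega) (fun B hB hBcard => ?_) (by simp [s, hqr, hqx])
  have hr := h (insert r B) (by rw [card_insert_of_notMem fun h => hrs (hB h)]; omega)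
  have hx := h (insert x B) (by rw [card_insert_of_notMem fun h => hxs (hB h)]; omega)
  rw [sum_powersetCard_two_insert g fun h => hrs (hB h)] at hr
  rw [sum_powersetCard_two_insert g fun h => hxs (hB h)] at hx
  rw [sum_sub_distrib, sub_eq_zero]
  exact add_left_cancel (hr.trans hx.symm)

lemma eq_zero_of_sum_powersetCard_two_eq_zero (g : Finset α → M) {k : ℕ} (hk : 2 ≤ k)
    (hkn : k + 2 ≤ Fintype.card α) (h : ∀ A : Finset α, #A = k → ∑ e ∈ A.powersetCard 2, g e = 0)
    {e : Finset α} (he : #e = 2) : g e = 0 := by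
  have hswap {r x q : α} (hqr : q ≠ r) (hqx : q ≠ x) : g {r, q} = g {x, q} :=
    pair_eq_pair_of_sum_powersetCard_two_eq_zero g hk hkn h hqr hqx
  have hconst : ∀ e' : Finset α, #e' = 2 → g e' = g e := by
    intro e' he'
    obtain ⟨a, b, hab, rfl⟩ := card_eq_two.mp he'
    obtain ⟨c, d, hcd, rfl⟩ := card_eq_two.mp he
    rcases eq_or_ne c b with rfl | hcb
    · rw [hswap hab.symm hcd, pair_comm]
    · rw [hswap hab.symm hcb.symm, pair_comm, hswap hcb hcd, pair_comm]
  obtain ⟨A, -, hA⟩ := exists_subset_card_eq (s := (univ : Finset α)) (n := k)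
    (by rw [card_univ]; omega)
  have := h A hA
  rw [sum_congr rfl fun e' he' => hconst e' (mem_powersetCard.mp he').2, sum_const,
    card_powersetCard, hA] at this
  exact (nsmul_eq_zero_iff_right (Nat.choose_pos hk).ne').mp this

end Finset

open scoped Finset

abbrev Slice (n k : ℕ) := {A : Finset (Fin n) // #A = k}

namespace Slice

open Finset

variable {n k : ℕ}

def coord (p : Fin n) : Slice n k → ℝ := fun A => if p ∈ A.1 then 1 else 0

/-- With `x_p = coord p` and `Z_p = 1 - 2 x_p`, these are the diagonals of `E_{pq}` and `S_{pq}`. -/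
def genE (p q : Fin n) : Slice n k → ℝ := coord p + coord q - 2 * coord p * coord q

def genS (p q : Fin n) : Slice n k → ℝ := coord q - coord p

variable (n k) in
def generators : Set (Slice n k → ℝ) := {f | ∃ p q : Fin n, p ≠ q ∧ (f = genE p q ∨ f = genS p q)}

variable (n k) in
def esSpan : Submodule ℝ (Slice n k → ℝ) := Submodule.span ℝ (generators n k)

@[simp] lemma coord_apply (p : Fin n) (A : Slice n k) : coord p A = if p ∈ A.1 then 1 else 0 := rfl

lemma coord_mul_self (p : Fin n) : (coord p : Slice n k → ℝ) * coord p = coord p := by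
  ext A; by_cases h : p ∈ A.1 <;> simp [h]

lemma sum_coord : ∑ p, (coord p : Slice n k → ℝ) = k := by
  ext A
  simp [Finset.sum_apply, A.2]

lemma genE_mem (p q : Fin n) : genE p q ∈ esSpan n k := by
  rcases eq_or_ne p q with rfl | h
  · have : (genE p p : Slice n k → ℝ) = 0 := by
      rw [genE, mul_assoc, coord_mul_self]; ring
    rw [this]; exact zero_mem _
  · exact Submodule.subset_span ⟨p, q, h, Or.inl rfl⟩

lemma genS_mem (p q : Fin n) : genS p q ∈ esSpan n k := by
  rcases eq_or_ne p q with rfl | h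
  · simp only [genS, sub_self]; exact zero_mem _
  · exact Submodule.subset_span ⟨p, q, h, Or.inr rfl⟩

lemma sum_sum_genE :
    ∑ p, ∑ q, (genE p q : Slice n k → ℝ) = 2 * k * ((n : Slice n k → ℝ) - k) := by
  simp only [genE, sum_sub_distrib, sum_add_distrib, ← mul_sum, ← sum_mul, sum_coord, sum_const,
    card_univ, Fintype.card_fin, nsmul_eq_mul]
  ring

lemma sum_genS (p : Fin n) :
    ∑ q, (genS p q : Slice n k → ℝ) = (k : Slice n k → ℝ) - (n : Slice n k → ℝ) * coord p := by
  simp only [genS, sum_sub_distrib, sum_coord, sum_const, card_univ, Fintype.card_fin, nsmul_eq_mul]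

lemma one_mem_esSpan (hk : 0 < k) (hkn : k < n) : (1 : Slice n k → ℝ) ∈ esSpan n k := by
  have hc : (2 * k * (n - k) : ℝ) ≠ 0 := by
    have : (k : ℝ) < n := by exact_mod_cast hkn
    have : (0 : ℝ) < k := by exact_mod_cast hk
    positivity
  have h : (2 * k * (n - k) : ℝ) • (1 : Slice n k → ℝ) = ∑ p, ∑ q, genE p q := by
    rw [sum_sum_genE]; ext; simp
  rw [← Submodule.smul_mem_iff _ hc, h]
  exact sum_mem fun p _ => sum_mem fun q _ => genE_mem p q

lemma coord_mem_esSpan (hk : 0 < k) (hkn : k < n) (p : Fin n) : coord p ∈ esSpan n k := by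
  have h : (n : ℝ) • (coord p : Slice n k → ℝ) = (k : ℝ) • 1 - ∑ q, genS p q := by
    rw [sum_genS]; ext; simp
  rw [← Submodule.smul_mem_iff _ (Nat.cast_ne_zero.mpr (by omega) : (n : ℝ) ≠ 0), h]
  exact sub_mem (Submodule.smul_mem _ _ (one_mem_esSpan hk hkn))
    (sum_mem fun q _ => genS_mem p q)

lemma coord_mul_coord_mem_esSpan (hk : 0 < k) (hkn : k < n) (p q : Fin n) :
    coord p * coord q ∈ esSpan n k := by
  have h : (2 : ℝ) • (coord p * coord q : Slice n k → ℝ) = coord p + coord q - genE p q := by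
    rw [genE]; ext; simp
  rw [← Submodule.smul_mem_iff _ (two_ne_zero : (2 : ℝ) ≠ 0), h]
  exact sub_mem (add_mem (coord_mem_esSpan hk hkn p) (coord_mem_esSpan hk hkn q)) (genE_mem p q)

lemma finrank_esSpan_of_eq_top (h : esSpan n k = ⊤) :
    Module.finrank ℝ (esSpan n k) = n.choose k := by
  rw [h, finrank_top, Module.finrank_fintype_fun_eq_card, Fintype.card_finset_len, Fintype.card_fin]

lemma esSpan_eq_top_of_single_mem (h : ∀ A : Slice n k, Pi.single A 1 ∈ esSpan n k) :
    esSpan n k = ⊤ :=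
  eq_top_iff.mpr <| (Pi.basisFun ℝ _).span_eq.symm.le.trans <|
    Submodule.span_le.mpr <| Set.range_subset_iff.mpr fun A => by rw [Pi.basisFun_apply]; exact h A

lemma esSpan_one_eq_top (hn : 2 ≤ n) : esSpan n 1 = ⊤ := by
  refine esSpan_eq_top_of_single_mem fun A => ?_
  obtain ⟨p, hp⟩ := card_eq_one.mp A.2
  have : Pi.single A 1 = coord p := by
    ext A'
    obtain ⟨a, ha⟩ := card_eq_one.mp A'.2
    simp [Pi.single_apply, Subtype.ext_iff, ha, hp, eq_comm]
  rw [this]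
  exact coord_mem_esSpan one_pos (by omega) p

lemma esSpan_pred_eq_top (hn : 2 ≤ n) : esSpan n (n - 1) = ⊤ := by
  have hcompl (B : Slice n (n - 1)) : #B.1ᶜ = 1 := by
    rw [card_compl, B.2, Fintype.card_fin]; omega
  refine esSpan_eq_top_of_single_mem fun A => ?_
  obtain ⟨p, hp⟩ := card_eq_one.mp (hcompl A)
  have : Pi.single A 1 = 1 - coord p := by
    ext A'
    obtain ⟨a, ha⟩ := card_eq_one.mp (hcompl A')
    have hiff : A' = A ↔ p ∉ A'.1 := by
      rw [Subtype.ext_iff, ← compl_inj_iff, ← mem_compl, ha, hp, singleton_inj, mem_singleton,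
        eq_comm]
    by_cases h : p ∈ A'.1 <;> simp [Pi.single_apply, hiff, h]
  rw [this]
  exact sub_mem (one_mem_esSpan (by omega) (by omega)) (coord_mem_esSpan (by omega) (by omega) p)

def quadratic (e : Slice n 2) : Slice n k → ℝ := ∏ p ∈ e.1, coord p

lemma quadratic_apply (e : Slice n 2) (A : Slice n k) :
    quadratic e A = if e.1 ⊆ A.1 then 1 else 0 := by
  simp [quadratic, Finset.prod_apply, prod_boole, subset_iff]

lemma quadratic_eq_coord_mul_coord {e : Slice n 2} {p q : Fin n} (hpq : p ≠ q) (he : e.1 = {p, q}) :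
    (quadratic e : Slice n k → ℝ) = coord p * coord q := by
  rw [quadratic, he, prod_pair hpq]

lemma coord_mul_coord_mem_span_quadratic {p q : Fin n} (hpq : p ≠ q) :
    (coord p * coord q : Slice n k → ℝ) ∈ Submodule.span ℝ (Set.range quadratic) := by
  rw [← quadratic_eq_coord_mul_coord hpq (e := ⟨{p, q}, card_pair hpq⟩) rfl]
  exact Submodule.subset_span ⟨_, rfl⟩

lemma coord_mem_span_quadratic (hk : 2 ≤ k) (p : Fin n) :
    (coord p : Slice n k → ℝ) ∈ Submodule.span ℝ (Set.range quadratic) := by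
  have h : ((k : ℝ) - 1) • (coord p : Slice n k → ℝ) = ∑ q ∈ univ.erase p, coord p * coord q := by
    rw [← mul_sum, sum_erase_eq_sub (mem_univ p), sum_coord, mul_sub, coord_mul_self]
    ext A; by_cases h : p ∈ A.1 <;> simp [h]
  have hk1 : (k : ℝ) - 1 ≠ 0 := by rw [sub_ne_zero]; exact_mod_cast (by omega : k ≠ 1)
  rw [← Submodule.smul_mem_iff _ hk1, h]
  exact sum_mem fun q hq => coord_mul_coord_mem_span_quadratic (ne_of_mem_erase hq).symm

lemma esSpan_eq_span_quadratic (hk : 2 ≤ k) (hkn : k < n) :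
    esSpan n k = Submodule.span ℝ (Set.range quadratic) := by
  apply le_antisymm
  · have hc := coord_mem_span_quadratic (n := n) hk
    rw [esSpan, Submodule.span_le]
    rintro f ⟨p, q, hpq, rfl | rfl⟩
    · rw [genE, mul_assoc, two_mul]
      exact sub_mem (add_mem (hc p) (hc q)) (add_mem (coord_mul_coord_mem_span_quadratic hpq)
        (coord_mul_coord_mem_span_quadratic hpq))
    · exact sub_mem (hc q) (hc p)
  · rw [Submodule.span_le]
    rintro _ ⟨e, rfl⟩
    obtain ⟨p, q, hpq, he⟩ := card_eq_two.mp e.2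
    rw [SetLike.mem_coe, quadratic_eq_coord_mul_coord hpq he]
    exact coord_mul_coord_mem_esSpan (by omega) hkn p q

lemma linearIndependent_quadratic (hk : 2 ≤ k) (hkn : k + 2 ≤ n) :
    LinearIndependent ℝ (quadratic : Slice n 2 → Slice n k → ℝ) := by
  rw [Fintype.linearIndependent_iff]
  intro g hg e
  let g' : Finset (Fin n) → ℝ := fun e => if h : #e = 2 then g ⟨e, h⟩ else 0
  suffices g' e.1 = 0 by simpa [g', e.2] using this
  refine eq_zero_of_sum_powersetCard_two_eq_zero g' hk (by simpa using hkn) (fun A hA => ?_) e.2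
  have hA := congrFun hg ⟨A, hA⟩
  simp only [Finset.sum_apply, Pi.smul_apply, smul_eq_mul, quadratic_apply, mul_ite, mul_one,
    mul_zero, Pi.zero_apply] at hA
  rw [← hA, ← sum_filter]
  exact sum_bij' (fun e he => ⟨e, (mem_powersetCard.mp he).2⟩) (fun a _ => a.1)
    (by simp +contextual [mem_powersetCard]) (by simp +contextual [mem_powersetCard])
    (by simp) (by simp) (by simp +contextual [g', mem_powersetCard])

end Slice

def ones {n : ℕ} (b : QState n) : Finset (Fin n) := {i | b i = 1}

lemma wt_eq_card_ones {n : ℕ} (b : QState n) : wt b = #(ones b) := by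
  have hval (v : Fin 2) : (v : ℕ) = if v = 1 then 1 else 0 := by fin_cases v <;> rfl
  simp only [wt, ones, Finset.card_filter, hval]

def onesEquiv (n k : ℕ) : HWBasis n k ≃ Slice n k :=
  Equiv.subtypeEquiv
    { toFun := ones
      invFun := fun A i => if i ∈ A then 1 else 0
      left_inv := fun b => funext fun i => by
        simp only [ones, Finset.mem_filter, Finset.mem_univ, true_and]
        generalize b i = v
        fin_cases v <;> rfl
      right_inv := fun A => by ext; simp [ones] }
    fun b => by rw [wt_eq_card_ones]; rfl

def skewDiagonal {ι κ : Type*} [DecidableEq ι] (e : ι ≃ κ) : (κ → ℝ) →ₗ[ℝ] Matrix ι ι ℂ where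
  toFun d := diagonal fun i => I * d (e i)
  map_add' d d' := by simp [mul_add]
  map_smul' r d := by ext i j; by_cases h : i = j <;> simp [h]; ring

lemma skewDiagonal_injective {ι κ : Type*} [DecidableEq ι] (e : ι ≃ κ) :
    Function.Injective (skewDiagonal e) := by
  intro d d' h
  funext x
  simpa [skewDiagonal, diagonal_apply, I_ne_zero] using congrFun (congrFun h (e.symm x)) (e.symm x)

lemma pauliZ_eq_diagonal {n : ℕ} (m : Fin n) :
    pauliZ m = diagonal fun b : QState n => if b m = 0 then 1 else -1 := rfl

lemma restrict_diagonal {n : ℕ} (k : ℕ) (d : QState n → ℂ) :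
    restrict k (diagonal d) = diagonal fun x : HWBasis n k => d x.1 := by
  ext x y
  simp [restrict, diagonal_apply, Subtype.ext_iff]

lemma coord_onesEquiv {n k : ℕ} (p : Fin n) (b : HWBasis n k) :
    Slice.coord p (onesEquiv n k b) = if b.1 p = 1 then 1 else 0 := by
  simp [onesEquiv, ones]

lemma I_smul_restrict_opE {n k : ℕ} (p q : Fin n) :
    I • restrict k (opE p q) = skewDiagonal (onesEquiv n k) (Slice.genE p q) := by
  rw [opE, pauliZ_eq_diagonal, pauliZ_eq_diagonal, diagonal_mul_diagonal, ← diagonal_one,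
    diagonal_sub, ← diagonal_smul, restrict_diagonal, ← diagonal_smul]
  refine congrArg diagonal (funext fun b => ?_)
  simp only [Slice.genE, Pi.add_apply, Pi.sub_apply, Pi.mul_apply, coord_onesEquiv]
  obtain hp | hp : b.1 p = 0 ∨ b.1 p = 1 := by omega
  all_goals obtain hq | hq : b.1 q = 0 ∨ b.1 q = 1 := by omega
  all_goals norm_num [hp, hq]

lemma I_smul_restrict_opS {n k : ℕ} (p q : Fin n) :
    I • restrict k (opS p q) = skewDiagonal (onesEquiv n k) (Slice.genS p q) := by
  rw [opS, pauliZ_eq_diagonal, pauliZ_eq_diagonal, diagonal_sub, ← diagonal_smul,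
    restrict_diagonal, ← diagonal_smul]
  refine congrArg diagonal (funext fun b => ?_)
  simp only [Slice.genS, Pi.sub_apply, coord_onesEquiv]
  obtain hp | hp : b.1 p = 0 ∨ b.1 p = 1 := by omega
  all_goals obtain hq | hq : b.1 q = 0 ∨ b.1 q = 1 := by omega
  all_goals norm_num [hp, hq]

lemma lie_skewDiagonal_eq_zero {ι κ : Type*} [Fintype ι] [DecidableEq ι] (e : ι ≃ κ)
    (d d' : κ → ℝ) : ⁅skewDiagonal e d, skewDiagonal e d'⁆ = 0 := by
  simp only [Ring.lie_def, skewDiagonal, LinearMap.coe_mk, AddHom.coe_mk, diagonal_mul_diagonal,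
    mul_comm, sub_self]

lemma dlaDim_eq_finrank_span {ι κ : Type*} [Fintype ι] [DecidableEq ι] (e : ι ≃ κ)
    {G : Set (Matrix ι ι ℂ)} {T : Set (κ → ℝ)}
    (hGT : (fun H => I • H) '' G = skewDiagonal e '' T) :
    dlaDim G = Module.finrank ℝ (Submodule.span ℝ T) := by
  have hcomm : ∀ x ∈ skewDiagonal e '' T, ∀ y ∈ skewDiagonal e '' T, ⁅x, y⁆ = 0 := by
    rintro _ ⟨d, -, rfl⟩ _ ⟨d', -, rfl⟩
    exact lie_skewDiagonal_eq_zero e d d'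
  calc dlaDim G
        = Module.finrank ℝ (LieSubalgebra.lieSpan ℝ _ (skewDiagonal e '' T)).toSubmodule := by
          rw [dlaDim, DLA, hGT]; rfl
    _ = Module.finrank ℝ ((Submodule.span ℝ T).map (skewDiagonal e)) := by
        rw [LieSubalgebra.coe_lieSpan_eq_span_of_forall_lie_eq_zero hcomm, Submodule.map_span]
    _ = Module.finrank ℝ (Submodule.span ℝ T) :=
        (Submodule.equivMapOfInjective _ (skewDiagonal_injective e) _).finrank_eq.symm

lemma I_smul_image_generators (n k : ℕ) :
    (fun H => I • H) '' {M : Matrix (HWBasis n k) (HWBasis n k) ℂ |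
        ∃ p q : Fin n, p ≠ q ∧ (M = restrict k (opE p q) ∨ M = restrict k (opS p q))} =
      skewDiagonal (onesEquiv n k) '' Slice.generators n k := by
  ext M
  constructor
  · rintro ⟨_, ⟨p, q, hpq, rfl | rfl⟩, rfl⟩
    · exact ⟨_, ⟨p, q, hpq, Or.inl rfl⟩, (I_smul_restrict_opE p q).symm⟩
    · exact ⟨_, ⟨p, q, hpq, Or.inr rfl⟩, (I_smul_restrict_opS p q).symm⟩
  · rintro ⟨_, ⟨p, q, hpq, rfl | rfl⟩, rfl⟩
    · exact ⟨_, ⟨p, q, hpq, Or.inl rfl⟩, I_smul_restrict_opE p q⟩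
    · exact ⟨_, ⟨p, q, hpq, Or.inr rfl⟩, I_smul_restrict_opS p q⟩

theorem dla_ES_dim_general (n k : ℕ) :
    (min k (n - k) = 1 →
      dlaDim {M : Matrix (HWBasis n k) (HWBasis n k) ℂ |
          ∃ p q : Fin n, p ≠ q ∧ (M = restrict k (opE p q) ∨ M = restrict k (opS p q))} = n) ∧
    (1 < min k (n - k) →
      dlaDim {M : Matrix (HWBasis n k) (HWBasis n k) ℂ |
          ∃ p q : Fin n, p ≠ q ∧ (M = restrict k (opE p q) ∨ M = restrict k (opS p q))} =
        n * (n - 1) / 2) := by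
  rw [dlaDim_eq_finrank_span (onesEquiv n k) (I_smul_image_generators n k),
    ← Slice.esSpan.eq_1]
  refine ⟨fun hmin => ?_, fun hmin => ?_⟩
  · obtain rfl | rfl : k = 1 ∨ k = n - 1 := by omega
    · rw [Slice.finrank_esSpan_of_eq_top (Slice.esSpan_one_eq_top (by omega)),
        Nat.choose_one_right]
    · rw [Slice.finrank_esSpan_of_eq_top (Slice.esSpan_pred_eq_top (by omega)),
        Nat.choose_symm (by omega), Nat.choose_one_right]
  · rw [Slice.esSpan_eq_span_quadratic (by omega) (by omega),
      finrank_span_eq_card (Slice.linearIndependent_quadratic (by omega) (by omega)),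
      Fintype.card_finset_len, Fintype.card_fin, Nat.choose_two_right]

/-- The DLA generated by all `Ẽ_{pq}` and `S̃_{pq}` (type VI): dimension `n` if
`min(k,n−k) = 1`, and `n(n−1)/2` if `min(k,n−k) > 1`. -/
theorem dla_ES_dim (n k : ℕ) (hn : 3 ≤ n) (hk1 : 1 ≤ k) (hk2 : k ≤ n - 1) :
    (min k (n - k) = 1 →
      dlaDim {M : Matrix (HWBasis n k) (HWBasis n k) ℂ |
          ∃ p q : Fin n, p ≠ q ∧ (M = restrict k (opE p q) ∨ M = restrict k (opS p q))} = n) ∧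
    (1 < min k (n - k) →
      dlaDim {M : Matrix (HWBasis n k) (HWBasis n k) ℂ |
          ∃ p q : Fin n, p ≠ q ∧ (M = restrict k (opE p q) ∨ M = restrict k (opS p q))} =
        n * (n - 1) / 2) :=
  dla_ES_dim_general n k
end
end

section
/- In the n-qubit Hilbert space (ℂ²)^{⊗n}, for any pairwise distinct qubit indices i, j, k, the nested commutator identity [J_{ik}, [J_{ij}, R_{jk}]] = 2 · S_{ik} · Z_j holds, where [A, B] = AB − BA. -/
open Matrix Complex

attribute [local instance 100] LieRing.ofAssociativeRing

noncomputable section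

/-!
Each operator in the identity is a weighted shift on the group `QState n = (ℤ/2)ⁿ`: it sends
`|b⟩` to a multiple of `|b + a⟩` for a fixed `a`, and weighted shifts multiply by adding the
shifts. `J_{ik}`, `J_{ij}`, `R_{jk}` shift by `e_i + e_k`, `e_i + e_j`, `e_j + e_k`, which sum to
zero in characteristic two, so both sides are diagonal and the identity reduces to comparing
the diagonal weights on the eight values of `(b_i, b_j, b_k)`.
-/

section WeightedShift

variable {Γ R : Type*} [AddCommGroup Γ] [DecidableEq Γ] [Ring R]

def weightedShift (a : Γ) (u : Γ → R) : Matrix Γ Γ R :=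
  Matrix.of fun b b' => if b = b' + a then u b' else 0

lemma weightedShift_mul [Fintype Γ] (a c : Γ) (u v : Γ → R) :
    weightedShift a u * weightedShift c v =
      weightedShift (a + c) (fun b => u (b + c) * v b) := by
  ext b b'
  rw [Matrix.mul_apply, Finset.sum_eq_single (b' + c)]
  · simp [weightedShift, add_assoc, add_comm c a]
  · intro x _ hx
    simp [weightedShift, hx]
  · simp

lemma smul_weightedShift (r : R) (a : Γ) (u : Γ → R) :
    r • weightedShift a u = weightedShift a (fun b => r * u b) := by
  ext b b'
  simp [weightedShift, mul_ite]

lemma weightedShift_add (a : Γ) (u v : Γ → R) :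
    weightedShift a u + weightedShift a v = weightedShift a (u + v) := by
  ext b b'
  simp only [weightedShift, Matrix.add_apply, Matrix.of_apply, Pi.add_apply]
  split_ifs <;> simp

lemma weightedShift_sub (a : Γ) (u v : Γ → R) :
    weightedShift a u - weightedShift a v = weightedShift a (u - v) := by
  ext b b'
  simp only [weightedShift, Matrix.sub_apply, Matrix.of_apply, Pi.sub_apply]
  split_ifs <;> simp

lemma lie_weightedShift [Fintype Γ] (a c : Γ) (u v : Γ → R) :
    ⁅weightedShift a u, weightedShift c v⁆ =
      weightedShift (a + c) (fun b => u (b + c) * v b - v (b + a) * u b) := by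
  rw [Ring.lie_def, weightedShift_mul, weightedShift_mul, add_comm c a, weightedShift_sub]
  rfl

end WeightedShift

lemma flipBit_eq_add_single {n : ℕ} (m : Fin n) (b : QState n) :
    flipBit m b = b + Pi.single m 1 := by
  funext l
  rcases eq_or_ne l m with rfl | h
  · simp only [flipBit, Function.update_self, Pi.add_apply, Pi.single_eq_same]
    omega
  · simp [flipBit, h]

lemma pauliX_eq_weightedShift {n : ℕ} (m : Fin n) :
    pauliX m = weightedShift (Pi.single m 1) (fun _ => 1) := by
  ext b b'
  simp [pauliX, weightedShift, flipBit_eq_add_single]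

lemma pauliY_eq_weightedShift {n : ℕ} (m : Fin n) :
    pauliY m = weightedShift (Pi.single m 1) (fun b => if b m = 0 then I else -I) := by
  ext b b'
  simp [pauliY, weightedShift, flipBit_eq_add_single]

lemma pauliZ_eq_weightedShift {n : ℕ} (m : Fin n) :
    pauliZ m = weightedShift 0 (fun b => if b m = 0 then 1 else -1) := by
  ext b b'
  simp only [pauliZ, weightedShift, Matrix.of_apply, add_zero]
  split_ifs with h <;> simp_all

lemma opJ_eq_weightedShift {n : ℕ} {p q : Fin n} (h : p ≠ q) :
    opJ p q = weightedShift (Pi.single p 1 + Pi.single q 1)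
      (fun b => if b p = b q then 0 else if b q = 0 then I else -I) := by
  rw [opJ, pauliX_eq_weightedShift, pauliY_eq_weightedShift, pauliX_eq_weightedShift,
    pauliY_eq_weightedShift, weightedShift_mul, weightedShift_mul,
    weightedShift_sub, smul_weightedShift]
  congr 1
  funext b
  simp only [Pi.sub_apply, Pi.add_apply, Pi.single_apply, h, if_false, add_zero]
  generalize b p = x, b q = y
  fin_cases x <;> fin_cases y <;> simp <;> ring

lemma opR_eq_weightedShift {n : ℕ} {p q : Fin n} (h : p ≠ q) :
    opR p q = weightedShift (Pi.single p 1 + Pi.single q 1)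
      (fun b => if b p = b q then 0 else 1) := by
  rw [opR, pauliX_eq_weightedShift, pauliY_eq_weightedShift, pauliX_eq_weightedShift,
    pauliY_eq_weightedShift, weightedShift_mul, weightedShift_mul,
    weightedShift_add, smul_weightedShift]
  congr 1
  funext b
  simp only [Pi.add_apply, Pi.single_apply, h, if_false, add_zero]
  generalize b p = x, b q = y
  fin_cases x <;> fin_cases y <;> simp <;> ring

lemma opS_mul_pauliZ_eq_weightedShift {n : ℕ} (p q r : Fin n) :
    opS p q * pauliZ r = weightedShift 0 (fun b =>
      (1 / 2 : ℂ) * ((if b p = 0 then 1 else -1) - (if b q = 0 then 1 else -1)) *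
        (if b r = 0 then 1 else -1)) := by
  rw [opS, pauliZ_eq_weightedShift, pauliZ_eq_weightedShift, pauliZ_eq_weightedShift,
    weightedShift_sub, smul_weightedShift, weightedShift_mul, add_zero]
  simp only [add_zero, Pi.sub_apply]

/-- `[J_{ik}, [J_{ij}, R_{jk}]] = 2·S_{ik}·Z_j` for pairwise distinct qubits. -/
theorem comm_J_J_R {n : ℕ} (i j k : Fin n) (hij : i ≠ j) (hjk : j ≠ k) (hik : i ≠ k) :
    ⁅opJ i k, ⁅opJ i j, opR j k⁆⁆ = (2 : ℂ) • (opS i k * pauliZ j) := by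
  rw [opJ_eq_weightedShift hik, opJ_eq_weightedShift hij, opR_eq_weightedShift hjk,
    lie_weightedShift, lie_weightedShift, opS_mul_pauliZ_eq_weightedShift, smul_weightedShift]
  congr 1
  · ext l
    simp only [Pi.add_apply, Pi.single_apply, Pi.zero_apply]
    split_ifs <;> rfl
  · funext b
    simp only [Pi.add_apply, Pi.single_apply, hij, hij.symm, hjk, hjk.symm, hik, hik.symm,
      if_true, if_false, add_zero]
    generalize b i = x, b j = y, b k = z
    fin_cases x <;> fin_cases y <;> fin_cases z <;> simp +decide [I_mul_I, sub_eq_add_neg]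

end
end
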